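/- Structure of intersections of the hypersurfaces A_I (Lemma 4.6): Let K be a field, n ≥ 1, and let I_1,…,I_k be nonempty subsets of {1,…,n}. Let X = {x ∈ K^n : Π_{i∈I_j} x_i = 1 for all j = 1,…,k}. Let s = n − |I_1 ∪ … ∪ I_k|, let L ⊆ ℤ^n be the subgroup generated by the indicator vectors a_j = (𝟙_{I_j}(1),…,𝟙_{I_j}(n)), let r ≥ 1 be the rank of L and c_1,…,c_r ∈ ℤ its elementary divisors (so s + r ≤ n). Then there is a bijection, given in both directions by monomial maps in the coordinates, between X and K^s × (K^×)^{n−s−r} × Π_{i=1}^r {y ∈ K^× : y^{c_i} = 1}. -/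

import Mathlib

/-!
Put `U = I₁ ∪ ⋯ ∪ I_k` and `t = |U|`. Every `a_j`, hence every `c_i f_i`, is supported in `U`,
so `f_1, …, f_r` lie in `ℤ^U`; as `ℤⁿ = span f_{≤r} ⊕ span f_{>r}`, they span a direct summand of
`ℤ^U` and extend to a basis `b_1, …, b_t` of `ℤ^U`. Appending the unit vectors outside `U` gives a
unimodular matrix `B` (rows `b_i`) with inverse `E`. On `X` the coordinates in `U` are units and
`x^v = 1` for all `v ∈ L`, so `x ↦ x^B` lands in the model (`(x^{b_i})^{c_i} = x^{c_i b_i} = 1`).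
Conversely `a_j = ∑ m_i c_i b_i`, so `∏_{I_j} (y^E) = y^{a_j E} = ∏ (y_i^{c_i})^{m_i} = 1`.
Finally `x ↦ x^B` and `y ↦ y^E` are mutually inverse, since every coordinate that may vanish
occurs in only one of the monomials.
-/

open Finset
open scoped Matrix

section Monomial

variable {M : Type*} [CommGroupWithZero M] {ι κ : Type*}

theorem Finset.prod_zpow_eq_zpow_sum₀ {a : M} (ha : a ≠ 0) (s : Finset ι) (e : ι → ℤ) :
    ∏ i ∈ s, a ^ e i = a ^ ∑ i ∈ s, e i := by
  induction s using Finset.cons_induction with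
  | empty => simp
  | cons i s hi ih => rw [prod_cons, sum_cons, zpow_add₀ ha, ih]

variable [Fintype ι] [Fintype κ]

theorem Finset.prod_zpow_eq_zpow_sum_of_subsingleton (a : M) {e : ι → ℤ}
    (he : {i | e i ≠ 0}.Subsingleton) : ∏ i, a ^ e i = a ^ ∑ i, e i := by
  by_cases hzero : ∀ i, e i = 0
  · simp [hzero]
  push Not at hzero
  obtain ⟨i, hi⟩ := hzero
  have hother : ∀ j ≠ i, e j = 0 := fun j hj => by_contra fun hj' => hj (he hj' hi)
  rw [prod_eq_single i (fun j _ hj => by rw [hother j hj, zpow_zero]) (by simp),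
    sum_eq_single i (fun j _ hj => hother j hj) (by simp)]

def evalMonomial (x : κ → M) (v : κ → ℤ) : M := ∏ k, x k ^ v k

def monomialMap (B : Matrix ι κ ℤ) (x : κ → M) : ι → M := fun i => evalMonomial x (B i)

variable (x : κ → M)

theorem evalMonomial_indicator [DecidableEq κ] (s : Finset κ) :
    evalMonomial x (fun k => if k ∈ s then 1 else 0) = ∏ k ∈ s, x k := by
  simp [evalMonomial, apply_ite, prod_ite_mem]

theorem evalMonomial_smul (m : ℤ) (v : κ → ℤ) :
    evalMonomial x (m • v) = evalMonomial x v ^ m := by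
  simp only [evalMonomial, ← prod_zpow, Pi.smul_apply, smul_eq_mul, mul_comm m, zpow_mul]

theorem evalMonomial_mul_eq_one {c : κ → ℤ} (hc : ∀ k, x k ^ c k = 1) (m : κ → ℤ) :
    evalMonomial x (m * c) = 1 :=
  prod_eq_one fun k _ => by rw [Pi.mul_apply, mul_comm, zpow_mul, hc, one_zpow]

theorem evalMonomial_ne_zero {v : κ → ℤ} (h : ∀ k, v k ≠ 0 → x k ≠ 0) :
    evalMonomial x v ≠ 0 := by
  refine prod_ne_zero_iff.mpr fun k _ => ?_
  by_cases hk : v k = 0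
  · simp [hk]
  · exact zpow_ne_zero _ (h k hk)

/-- Because `0 ^ 0 = 1` and `0⁻¹ = 0`, the law `a ^ (m + n) = a ^ m * a ^ n` fails at `a = 0`:
a vanishing coordinate of `x` may occur in at most one of the monomials `x ^ B i`. -/
theorem evalMonomial_monomialMap {B : Matrix ι κ ℤ}
    (hx : ∀ k, x k = 0 → {i | B i k ≠ 0}.Subsingleton) (e : ι → ℤ) :
    evalMonomial (monomialMap B x) e = evalMonomial x (e ᵥ* B) := by
  simp only [evalMonomial, monomialMap, ← prod_zpow, ← zpow_mul]
  rw [prod_comm]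
  refine prod_congr rfl fun k _ => ?_
  simp only [Matrix.vecMul, dotProduct, mul_comm (e _)]
  by_cases hk : x k = 0
  · refine prod_zpow_eq_zpow_sum_of_subsingleton _ ((hx k hk).anti fun i hi h0 => hi ?_)
    simp [h0]
  · exact prod_zpow_eq_zpow_sum₀ hk _ _

theorem monomialMap_monomialMap {ι' : Type*} {B : Matrix ι κ ℤ} (E : Matrix ι' ι ℤ)
    (hx : ∀ k, x k = 0 → {i | B i k ≠ 0}.Subsingleton) :
    monomialMap E (monomialMap B x) = monomialMap (E * B) x :=
  funext fun j => evalMonomial_monomialMap x hx (E j)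

theorem monomialMap_one [DecidableEq κ] : monomialMap (1 : Matrix κ κ ℤ) x = x := by
  funext j
  simp [monomialMap, evalMonomial, Matrix.one_apply, apply_ite]

theorem evalMonomial_eq_one_of_mem_span {A : Matrix ι κ ℤ} (hA : monomialMap A x = 1)
    (hx : ∀ k, x k = 0 → ∀ i, A i k = 0) {v : κ → ℤ} (hv : v ∈ Submodule.span ℤ (Set.range A)) :
    evalMonomial x v = 1 := by
  obtain ⟨m, rfl⟩ := (Submodule.mem_span_range_iff_exists_fun ℤ).mp hv
  have hcol (k) (hk : x k = 0) : {i | A i k ≠ 0}.Subsingleton :=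
    fun i hi _ _ => absurd (hx k hk i) hi
  rw [← Matrix.vecMul_eq_sum, ← evalMonomial_monomialMap x hcol, hA]
  exact prod_eq_one fun _ _ => one_zpow _

theorem monomialMap_invOn [DecidableEq κ] {B E : Matrix κ κ ℤ} (hEB : E * B = 1)
    {X Y : Set (κ → M)} (hX : ∀ x ∈ X, ∀ k, x k = 0 → {i | B i k ≠ 0}.Subsingleton)
    (hY : ∀ y ∈ Y, ∀ i, y i = 0 → {j | E j i ≠ 0}.Subsingleton) :
    Set.InvOn (monomialMap E) (monomialMap B) X Y := by
  refine ⟨fun x hx => ?_, fun y hy => ?_⟩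
  · rw [monomialMap_monomialMap x E (hX x hx), hEB, monomialMap_one]
  · rw [monomialMap_monomialMap y B (hY y hy), mul_eq_one_comm.mp hEB, monomialMap_one]

end Monomial

section AdaptedBasis

variable {R : Type*}

theorem Module.Basis.exists_disjoint_sup_eq_of_span_image_le [Ring R] {V ι : Type*}
    [AddCommGroup V] [Module R V] (f : Module.Basis ι R V) (s : Set ι) {S : Submodule R V}
    (hS : Submodule.span R (f '' s) ≤ S) :
    ∃ P, Disjoint (Submodule.span R (f '' s)) P ∧ Submodule.span R (f '' s) ⊔ P = S := by
  have hcompl := f.linearIndependent.isCompl_span_image f.span_eq (isCompl_compl (x := s))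
  refine ⟨Submodule.span R (f '' sᶜ) ⊓ S, hcompl.disjoint.mono_right inf_le_left, ?_⟩
  rw [← sup_inf_assoc_of_le _ hS, hcompl.sup_eq_top, top_inf_eq]

theorem exists_basis_sum_elim_single [Ring R] {κ ι : Type*} [Fintype κ] [DecidableEq κ]
    (U : Finset κ) {v : ι → κ → R} (hv : LinearIndependent R v)
    (hspan : Submodule.span R (Set.range v) = Submodule.pi ↑Uᶜ fun _ => ⊥) :
    ∃ b : Module.Basis (ι ⊕ ↥Uᶜ) R (κ → R),
      ⇑b = Sum.elim v fun k : ↥Uᶜ => Pi.single (k : κ) 1 := by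
  let z : ↥Uᶜ → κ → R := fun k => Pi.single (k : κ) 1
  have hz : Submodule.span R (Set.range z) ≤ Submodule.pi ↑U fun _ => ⊥ :=
    Submodule.span_le.mpr <| by
      rintro _ ⟨k, rfl⟩ j hj
      exact Pi.single_eq_of_ne (by rintro rfl; exact mem_compl.mp k.2 hj) 1
  have hdisj : Disjoint (Submodule.span R (Set.range v)) (Submodule.span R (Set.range z)) := by
    refine Submodule.disjoint_def.mpr fun w hwv hwz => funext fun k => ?_
    by_cases hk : k ∈ U
    · exact (Submodule.mem_pi.mp (hz hwz)) k hk
    · exact (Submodule.mem_pi.mp (hspan ▸ hwv)) k (mem_compl.mpr hk)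
  have hli : LinearIndependent R (Sum.elim v z) :=
    hv.sum_type ((Pi.linearIndependent_single_one κ R).comp _ Subtype.val_injective) hdisj
  have htop : ⊤ ≤ Submodule.span R (Set.range (Sum.elim v z)) := by
    rw [← (Pi.basisFun R κ).span_eq, Submodule.span_le]
    rintro _ ⟨k, rfl⟩
    rw [Pi.basisFun_apply, Set.Sum.elim_range, Submodule.span_union, hspan]
    by_cases hk : k ∈ U
    · refine Submodule.mem_sup_left (Submodule.mem_pi.mpr fun j hj => ?_)
      exact Pi.single_eq_of_ne (by rintro rfl; exact mem_compl.mp hj hk) 1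
    · exact Submodule.mem_sup_right (Submodule.subset_span ⟨⟨k, mem_compl.mpr hk⟩, rfl⟩)
  exact ⟨.mk hli htop, Module.Basis.coe_mk hli htop⟩

theorem exists_equiv_fin_of_sum_sum {r m t n : ℕ} {α : Type*} [Fintype α] (hrm : r + m = t)
    (htn : t ≤ n) (hα : Fintype.card α = n - t) :
    ∃ e : (Fin r ⊕ Fin m) ⊕ α ≃ Fin n, (∀ a : Fin r, (e (.inl (.inl a)) : ℕ) = a) ∧
      (∀ y, (e (.inl y) : ℕ) < t) ∧ ∀ k, t ≤ (e (.inr k) : ℕ) := by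
  refine ⟨((finSumFinEquiv.trans (finCongr hrm)).sumCongr (Fintype.equivFinOfCardEq hα)).trans
    (finSumFinEquiv.trans (finCongr (by omega))), fun a => by simp, fun y => ?_, fun k => by simp⟩
  have := (finSumFinEquiv y).isLt
  simp only [Equiv.trans_apply, Equiv.sumCongr_apply, Sum.map_inl, finSumFinEquiv_apply_left,
    Fin.val_castAdd, finCongr_apply, Fin.val_cast]
  omega

theorem Module.Basis.exists_adapted_to_support [CommRing R] [IsDomain R]
    [IsPrincipalIdealRing R] {n r : ℕ} (U : Finset (Fin n)) (hr : r ≤ #U)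
    (f : Module.Basis (Fin n) R (Fin n → R))
    (hfU : ∀ i : Fin n, (i : ℕ) < r → ∀ k ∉ U, f i k = 0) :
    ∃ b : Module.Basis (Fin n) R (Fin n → R), (∀ i : Fin n, (i : ℕ) < r → b i = f i) ∧
      (∀ i : Fin n, (i : ℕ) < #U → ∀ k ∉ U, b i k = 0) ∧
      ∀ i : Fin n, #U ≤ (i : ℕ) → ∃ k ∉ U, b i = Pi.single k 1 := by
  have hUn : #U ≤ n := by simpa using card_le_univ U
  let S : Submodule R (Fin n → R) := Submodule.pi ↑Uᶜ fun _ => ⊥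
  have mem_S (v : Fin n → R) : v ∈ S ↔ ∀ k ∉ U, v k = 0 := by simp [S, Submodule.mem_pi]
  obtain ⟨P, hdisj, hsup⟩ := f.exists_disjoint_sup_eq_of_span_image_le {i | (i : ℕ) < r}
    (S := S) <| Submodule.span_le.mpr <| by
      rintro _ ⟨i, hi, rfl⟩
      exact (mem_S _).mpr (hfU i hi)
  obtain ⟨m, bP⟩ := Submodule.basisOfPid (Pi.basisFun R (Fin n)) P
  let u : Fin r → Fin n → R := f ∘ Fin.castLE (hr.trans hUn)
  let w : Fin m → Fin n → R := P.subtype ∘ bP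
  have hspan_u : Submodule.span R (Set.range u) = Submodule.span R (f '' {i | (i : ℕ) < r}) := by
    rw [Set.range_comp, Fin.range_castLE]
  have hspan_w : Submodule.span R (Set.range w) = P := by
    rw [Set.range_comp, Submodule.span_image, bP.span_eq, Submodule.map_top,
      Submodule.range_subtype]
  have hspan_uw : Submodule.span R (Set.range (Sum.elim u w)) = S := by
    rw [Set.Sum.elim_range, Submodule.span_union, hspan_u, hspan_w, hsup]
  obtain ⟨b₀, hb₀⟩ := exists_basis_sum_elim_single U
    ((f.linearIndependent.comp _ (Fin.castLE_injective _)).sum_type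
      (bP.linearIndependent.map' P.subtype P.ker_subtype) (by rwa [hspan_u, hspan_w])) hspan_uw
  have hcard : r + m + (n - #U) = n := by
    simpa using Fintype.card_congr (b₀.indexEquiv (Pi.basisFun R (Fin n)))
  obtain ⟨e, he_inl_inl, he_inl, he_inr⟩ :=
    exists_equiv_fin_of_sum_sum (α := ↥Uᶜ) (by omega : r + m = #U) hUn (by simp)
  have hb (x) : b₀.reindex e (e x) = b₀ x := by
    rw [Module.Basis.reindex_apply, e.symm_apply_apply]
  refine ⟨b₀.reindex e, fun i hi => ?_, fun i hi k hk => ?_, fun i hi => ?_⟩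
  · have hei : e (.inl (.inl ⟨i, hi⟩)) = i := Fin.ext (he_inl_inl _)
    rw [← hei, hb, hb₀]
    exact congrArg f (Fin.ext (he_inl_inl ⟨i, hi⟩).symm)
  · obtain ⟨y | k', rfl⟩ := e.surjective i
    · rw [hb, hb₀]
      exact (mem_S _).mp (hspan_uw ▸ Submodule.subset_span ⟨y, rfl⟩) k hk
    · exact absurd hi (not_lt.mpr (he_inr k'))
  · obtain ⟨y | k', rfl⟩ := e.surjective i
    · exact absurd hi (not_le.mpr (he_inl y))
    · exact ⟨k', mem_compl.mp k'.2, by rw [hb, hb₀]; rfl⟩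

theorem Module.Basis.repr_apply_eq_apply_of_eq_single {ι κ : Type*} [Semiring R]
    [Nontrivial R] [DecidableEq κ] (b : Module.Basis ι R (κ → R)) {i : ι} {k : κ}
    (hbi : b i = Pi.single k 1)
    (hk : ∀ i', b i' k ≠ 0 → i' = i) (v : κ → R) : b.repr v i = v k := by
  have hcoord : b.coord i = LinearMap.proj k := b.ext fun i' => by
    by_cases h : b i' k = 0
    · have hne : i' ≠ i := by rintro rfl; simp [hbi] at h
      simp [Module.Basis.coord_apply, h, hne.symm]
    · obtain rfl := hk i' h
      rw [Module.Basis.coord_apply, Module.Basis.repr_self]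
      simp [hbi]
  simpa using LinearMap.congr_fun hcoord v

end AdaptedBasis

theorem exists_adapted_unimodular_matrix {n r : ℕ} (U : Finset (Fin n)) (hr : r ≤ #U)
    (f : Module.Basis (Fin n) ℤ (Fin n → ℤ))
    (hfU : ∀ i : Fin n, (i : ℕ) < r → ∀ k ∉ U, f i k = 0) :
    ∃ B E : Matrix (Fin n) (Fin n) ℤ, E * B = 1 ∧ (∀ i : Fin n, (i : ℕ) < r → B i = f i) ∧
      (∀ i : Fin n, (i : ℕ) < #U → ∀ k ∉ U, B i k = 0) ∧
      (∀ k ∉ U, {i | B i k ≠ 0}.Subsingleton) ∧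
      ∀ i : Fin n, #U ≤ (i : ℕ) → {j | E j i ≠ 0}.Subsingleton := by
  obtain ⟨b, hbf, hbU, hbs⟩ := f.exists_adapted_to_support U hr hfU
  have hsingle (i : Fin n) {k : Fin n} (hk : k ∉ U) (h : b i k ≠ 0) : b i = Pi.single k 1 := by
    by_cases hi : (i : ℕ) < #U
    · exact absurd (hbU i hi k hk) h
    obtain ⟨k', -, hbk'⟩ := hbs i (not_lt.mp hi)
    obtain rfl : k = k' := by_contra fun hne => h (by simp [hbk', hne])
    exact hbk'
  have hcol {k : Fin n} (hk : k ∉ U) : {i | b i k ≠ 0}.Subsingleton :=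
    fun i hi i' hi' => b.injective ((hsingle i hk hi).trans (hsingle i' hk hi').symm)
  refine ⟨Matrix.of b, Matrix.of fun j i => b.repr (Pi.single j 1) i, ?_, hbf, hbU,
    fun k hk => hcol hk, fun i hi => ?_⟩
  · ext j k
    simpa [Matrix.mul_apply, Matrix.one_apply, Finset.sum_apply, Pi.single_apply, eq_comm]
      using congrFun (b.sum_repr (Pi.single j 1)) k
  · obtain ⟨k, hk, hbi⟩ := hbs i hi
    have hbik : b i k ≠ 0 := by simp [hbi]
    intro j hj j' hj'
    simp only [Set.mem_ofPred_eq, Matrix.of_apply, b.repr_apply_eq_apply_of_eq_single hbi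
      (fun i' hi' => hcol hk hi' hbik)] at hj hj'
    have hsupp {j : Fin n} (hj : (Pi.single j 1 : Fin n → ℤ) k ≠ 0) : j = k :=
      by_contra fun h => hj (Pi.single_eq_of_ne (Ne.symm h) 1)
    exact (hsupp hj).trans (hsupp hj').symm

section Intersection

variable {M : Type*} [CommGroupWithZero M] {n k : ℕ}

def indicatorMatrix (I : Fin k → Finset (Fin n)) : Matrix (Fin k) (Fin n) ℤ :=
  fun j i => if i ∈ I j then 1 else 0

def hypersurfaceIntersection (I : Fin k → Finset (Fin n)) : Set (Fin n → M) :=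
  {x | ∀ j, ∏ i ∈ I j, x i = 1}

/-- `∏_{i<r} {y ∈ Mˣ : y ^ cᵢ = 1} × (Mˣ)^{t-r} × M^{n-t}` (when every `cᵢ` with `i < r` is
nonzero), laid out along the coordinates of `Fin n`. -/
def productModel (r t : ℕ) (c : Fin n → ℤ) : Set (Fin n → M) :=
  {y | (∀ i : Fin n, (i : ℕ) < r → y i ^ c i = 1) ∧
    ∀ i : Fin n, r ≤ (i : ℕ) → (i : ℕ) < t → y i ≠ 0}

variable {I : Fin k → Finset (Fin n)}

theorem mem_hypersurfaceIntersection_iff {x : Fin n → M} :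
    x ∈ hypersurfaceIntersection I ↔ monomialMap (indicatorMatrix I) x = 1 := by
  simp only [hypersurfaceIntersection, Set.mem_ofPred_eq, funext_iff, Pi.one_apply, monomialMap]
  exact forall_congr' fun j => by rw [← evalMonomial_indicator]; rfl

theorem ne_zero_of_mem_hypersurfaceIntersection {x : Fin n → M}
    (hx : x ∈ hypersurfaceIntersection I) {i : Fin n} (hi : i ∈ univ.biUnion I) : x i ≠ 0 := by
  obtain ⟨j, -, hij⟩ := mem_biUnion.mp hi
  intro h0
  simpa [prod_eq_zero hij h0] using hx j

theorem le_of_apply_eq_zero_of_mem_productModel {r t : ℕ} {c : Fin n → ℤ} {y : Fin n → M}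
    (hy : y ∈ productModel r t c) (hc : ∀ i : Fin n, c i = 0 ↔ r ≤ (i : ℕ)) {i : Fin n}
    (hi : y i = 0) : t ≤ (i : ℕ) := by
  by_contra! hit
  by_cases hir : (i : ℕ) < r
  · have hci : c i ≠ 0 := fun h => absurd ((hc i).mp h) (not_le.mpr hir)
    simpa [hi, zero_zpow _ hci] using hy.1 i hir
  · exact hy.2 i (not_lt.mp hir) hit hi

theorem apply_eq_zero_of_smul_mem_span_indicatorMatrix {c : ℤ} (hc : c ≠ 0) {v : Fin n → ℤ}
    (hv : c • v ∈ Submodule.span ℤ (Set.range (indicatorMatrix I))) {i : Fin n}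
    (hi : i ∉ univ.biUnion I) : v i = 0 := by
  have hle : Submodule.span ℤ (Set.range (indicatorMatrix I)) ≤
      Submodule.pi ↑(univ.biUnion I)ᶜ fun _ => ⊥ := Submodule.span_le.mpr <| by
    rintro _ ⟨j, rfl⟩ i' hi'
    simp only [Finset.coe_compl, Set.mem_compl_iff, mem_coe, mem_biUnion, mem_univ, true_and,
      not_exists] at hi'
    simp [indicatorMatrix, hi' j]
  have := Submodule.mem_pi.mp (hle hv) i (by simpa using hi)
  simpa [hc] using this

theorem monomialMap_mapsTo_productModel {r : ℕ} {c : Fin n → ℤ} {B : Matrix (Fin n) (Fin n) ℤ}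
    (hcB : ∀ i : Fin n, (i : ℕ) < r →
      c i • B i ∈ Submodule.span ℤ (Set.range (indicatorMatrix I)))
    (hBU : ∀ i : Fin n, (i : ℕ) < #(univ.biUnion I) → ∀ k ∉ univ.biUnion I, B i k = 0) :
    Set.MapsTo (monomialMap B) (hypersurfaceIntersection I : Set (Fin n → M))
      (productModel r #(univ.biUnion I) c) := by
  intro x hx
  have hx_span (v) (hv : v ∈ Submodule.span ℤ (Set.range (indicatorMatrix I))) :
      evalMonomial x v = 1 := by
    refine evalMonomial_eq_one_of_mem_span x (mem_hypersurfaceIntersection_iff.mp hx)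
      (fun i hi j => ?_) hv
    have : i ∉ I j := fun hij =>
      ne_zero_of_mem_hypersurfaceIntersection hx (mem_biUnion.mpr ⟨j, mem_univ j, hij⟩) hi
    simp [indicatorMatrix, this]
  refine ⟨fun i hi => ?_, fun i _ hi => ?_⟩
  · rw [monomialMap, ← evalMonomial_smul]
    exact hx_span _ (hcB i hi)
  · refine evalMonomial_ne_zero x fun k hk => ne_zero_of_mem_hypersurfaceIntersection hx ?_
    by_contra hkU
    exact hk (hBU i hi k hkU)

theorem monomialMap_mapsTo_hypersurfaceIntersection {r t : ℕ} {c : Fin n → ℤ}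
    {B E : Matrix (Fin n) (Fin n) ℤ} (hBE : B * E = 1) (hc : ∀ i : Fin n, c i = 0 ↔ r ≤ (i : ℕ))
    (hIB : ∀ j, ∃ m : Fin n → ℤ, indicatorMatrix I j = (m * c) ᵥ* B)
    (hE : ∀ i : Fin n, t ≤ (i : ℕ) → {j | E j i ≠ 0}.Subsingleton) :
    Set.MapsTo (monomialMap E) (productModel r t c : Set (Fin n → M))
      (hypersurfaceIntersection I) := by
  intro y hy
  rw [mem_hypersurfaceIntersection_iff]
  funext j
  obtain ⟨m, hm⟩ := hIB j
  have hcol (i) (hi : y i = 0) : {j | E j i ≠ 0}.Subsingleton :=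
    hE i (le_of_apply_eq_zero_of_mem_productModel hy hc hi)
  rw [Pi.one_apply, monomialMap, evalMonomial_monomialMap y hcol, hm, Matrix.vecMul_vecMul, hBE,
    Matrix.vecMul_one]
  refine evalMonomial_mul_eq_one y (fun i => ?_) m
  by_cases hir : (i : ℕ) < r
  · exact hy.1 i hir
  · rw [(hc i).mpr (not_lt.mp hir), zpow_zero]

theorem sum_smul_eq_vecMul {r : ℕ} {c : Fin n → ℤ} (hc : ∀ i : Fin n, c i = 0 ↔ r ≤ (i : ℕ))
    {f : Fin n → Fin n → ℤ} {B : Matrix (Fin n) (Fin n) ℤ}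
    (hBf : ∀ i : Fin n, (i : ℕ) < r → B i = f i) (m : Fin n → ℤ) :
    ∑ i, (m i * c i) • f i = (m * c) ᵥ* B := by
  rw [Matrix.vecMul_eq_sum]
  refine sum_congr rfl fun i _ => ?_
  by_cases hir : (i : ℕ) < r
  · rw [Pi.mul_apply, hBf i hir]
  · simp [(hc i).mpr (not_lt.mp hir)]

end Intersection

theorem intersection_of_hypersurfaces_structure
    (K : Type*) [Field K] (n k : ℕ)
    (I : Fin k → Finset (Fin n))
    (s r : ℕ) (hsr : s + r ≤ n)
    (hs : s = n - (Finset.univ.biUnion I).card)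
    (f : Fin n → (Fin n → ℤ))
    (hf : LinearIndependent ℤ f ∧ Submodule.span ℤ (Set.range f) = ⊤)
    (c : Fin n → ℤ) (hc : ∀ i : Fin n, c i = 0 ↔ r ≤ (i : ℕ))
    (hL : ∀ v : Fin n → ℤ,
      v ∈ Submodule.span ℤ
          (Set.range fun j : Fin k => fun i : Fin n => if i ∈ I j then (1 : ℤ) else 0) ↔
        ∃ m : Fin n → ℤ, v = ∑ i : Fin n, (m i * c i) • f i) :
    ∃ F G : (Fin n → K) → (Fin n → K),
      (∃ E : Fin n → Fin n → ℤ, ∀ x i, F x i = ∏ j : Fin n, x j ^ E i j) ∧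
      (∃ E : Fin n → Fin n → ℤ, ∀ y i, G y i = ∏ j : Fin n, y j ^ E i j) ∧
      Set.BijOn F {x : Fin n → K | ∀ j : Fin k, ∏ i ∈ I j, x i = 1}
        {y : Fin n → K | (∀ i : Fin n, (i : ℕ) < r → y i ^ c i = 1) ∧
          ∀ i : Fin n, r ≤ (i : ℕ) → (i : ℕ) < n - s → y i ≠ 0} ∧
      Set.BijOn G
        {y : Fin n → K | (∀ i : Fin n, (i : ℕ) < r → y i ^ c i = 1) ∧
          ∀ i : Fin n, r ≤ (i : ℕ) → (i : ℕ) < n - s → y i ≠ 0}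
        {x : Fin n → K | ∀ j : Fin k, ∏ i ∈ I j, x i = 1} ∧
      (∀ x ∈ {x : Fin n → K | ∀ j : Fin k, ∏ i ∈ I j, x i = 1}, G (F x) = x) ∧
      (∀ y ∈ {y : Fin n → K | (∀ i : Fin n, (i : ℕ) < r → y i ^ c i = 1) ∧
          ∀ i : Fin n, r ≤ (i : ℕ) → (i : ℕ) < n - s → y i ≠ 0}, F (G y) = y) := by
  set U := univ.biUnion I
  have htU : n - s = #U := by have := (card_le_univ U).trans_eq (Fintype.card_fin n); omega
  have hcf (i : Fin n) : c i • f i ∈ Submodule.span ℤ (Set.range (indicatorMatrix I)) :=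
    (hL _).mpr ⟨Pi.single i 1, by simp [Pi.single_apply]⟩
  have hc_ne (i : Fin n) (hi : (i : ℕ) < r) : c i ≠ 0 := fun h => absurd ((hc i).mp h) (by omega)
  obtain ⟨B, E, hEB, hBf, hBU, hBcol, hEcol⟩ := exists_adapted_unimodular_matrix (r := r) U
    (by omega) (.mk hf.1 hf.2.ge) fun i hi k hk => by
      simpa using apply_eq_zero_of_smul_mem_span_indicatorMatrix (hc_ne i hi) (hcf i) hk
  simp only [Module.Basis.coe_mk] at hBf
  have hIB (j : Fin k) : ∃ m : Fin n → ℤ, indicatorMatrix I j = (m * c) ᵥ* B := by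
    obtain ⟨m, hm⟩ := (hL _).mp (Submodule.subset_span ⟨j, rfl⟩)
    exact ⟨m, hm.trans (sum_smul_eq_vecMul hc hBf m)⟩
  have hF : Set.MapsTo (monomialMap B) (hypersurfaceIntersection I : Set (Fin n → K))
      (productModel r #U c) :=
    monomialMap_mapsTo_productModel (fun i hi => hBf i hi ▸ hcf i) hBU
  have hG : Set.MapsTo (monomialMap E) (productModel r #U c : Set (Fin n → K))
      (hypersurfaceIntersection I) :=
    monomialMap_mapsTo_hypersurfaceIntersection (mul_eq_one_comm.mp hEB) hc hIB hEcol
  have hinv := monomialMap_invOn (M := K) hEB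
    (fun x hx k hk => hBcol k fun hkU => ne_zero_of_mem_hypersurfaceIntersection hx hkU hk)
    (fun y hy i hi => hEcol i (le_of_apply_eq_zero_of_mem_productModel hy hc hi))
  rw [htU]
  exact ⟨monomialMap B, monomialMap E, ⟨B, fun _ _ => rfl⟩, ⟨E, fun _ _ => rfl⟩,
    hinv.bijOn hF hG, hinv.symm.bijOn hG hF, hinv.1, hinv.2⟩
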